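/- arXiv:1511.06720 — 8 statements merged into one kernel-verified Lean document; each statement's English description precedes it below -/
import Mathlib

section
/- Let A be a commutative unital k-algebra and let φ, ψ : H → A be unital algebra morphisms that both vanish on N. Then the convolution product φ ⋆ ψ is again a unital algebra morphism from H to A and vanishes on N. -/
open TensorProduct

/-- The convolution product of two linear maps from a bialgebra `H` to an algebra `A`:
`φ ⋆ ψ := m_A ∘ (φ ⊗ ψ) ∘ Δ`. -/
noncomputable def conv (k : Type*) {H A : Type*} [CommSemiring k] [Semiring H]
    [Bialgebra k H] [Semiring A] [Algebra k A] (φ ψ : H →ₗ[k] A) : H →ₗ[k] A :=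
  LinearMap.mul' k A ∘ₗ TensorProduct.map φ ψ ∘ₗ Coalgebra.comul

lemma conv_eq_algHom {k H A : Type*} [CommSemiring k] [Semiring H] [Bialgebra k H]
    [CommSemiring A] [Algebra k A] (φ ψ : H →ₐ[k] A) (x : H) :
    conv k φ.toLinearMap ψ.toLinearMap x =
      ((Algebra.TensorProduct.lmul' k).comp
        ((Algebra.TensorProduct.map φ ψ).comp (Bialgebra.comulAlgHom k H))) x := rfl

/-- if `φ, ψ : H → A` are unital algebra morphisms into a commutative
algebra `A`, both vanishing on the left coideal `N ⊆ ker ε` (a coideal for the reduced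
coproduct), then `φ ⋆ ψ` is again a unital algebra morphism vanishing on `N`. -/
theorem conv_algHom_vanishing {k H A : Type*} [Field k] [Ring H] [HopfAlgebra k H]
    [CommRing A] [Algebra k A] (N : Submodule k H)
    (hNcounit : ∀ x ∈ N, Coalgebra.counit (R := k) x = 0)
    (hNcoideal : ∀ x ∈ N,
      Coalgebra.comul (R := k) x - (1 : H) ⊗ₜ[k] x - x ⊗ₜ[k] (1 : H) ∈
        Submodule.span k {t : H ⊗[k] H | ∃ x' ∈ N, ∃ y : H, t = x' ⊗ₜ[k] y})
    (φ ψ : H →ₐ[k] A) (hφ : ∀ x ∈ N, φ x = 0) (hψ : ∀ x ∈ N, ψ x = 0) :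
    conv k φ.toLinearMap ψ.toLinearMap 1 = 1 ∧
    (∀ x y : H, conv k φ.toLinearMap ψ.toLinearMap (x * y) =
      conv k φ.toLinearMap ψ.toLinearMap x * conv k φ.toLinearMap ψ.toLinearMap y) ∧
    (∀ x ∈ N, conv k φ.toLinearMap ψ.toLinearMap x = 0) := by
  refine ⟨?_, ?_, ?_⟩
  · rw [conv_eq_algHom]; exact map_one _
  · intro x y
    rw [conv_eq_algHom, conv_eq_algHom, conv_eq_algHom]
    exact map_mul _ x y
  · intro x hx
    have hdecomp : Coalgebra.comul (R := k) x =
        (Coalgebra.comul (R := k) x - (1 : H) ⊗ₜ[k] x - x ⊗ₜ[k] (1 : H))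
        + (1 : H) ⊗ₜ[k] x + x ⊗ₜ[k] (1 : H) := by abel
    have hzero : ∀ s ∈ Submodule.span k {t : H ⊗[k] H | ∃ x' ∈ N, ∃ y : H, t = x' ⊗ₜ[k] y},
        (LinearMap.mul' k A) ((TensorProduct.map φ.toLinearMap ψ.toLinearMap) s) = 0 := by
      intro s hs
      induction hs using Submodule.span_induction with
      | mem t ht =>
        obtain ⟨x', hx', y, rfl⟩ := ht
        simp [hφ x' hx']
      | zero => simp
      | add a b _ _ ha hb => simp [ha, hb]
      | smul c a _ ha => simp [ha]
    have : conv k φ.toLinearMap ψ.toLinearMap x =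
        (LinearMap.mul' k A) ((TensorProduct.map φ.toLinearMap ψ.toLinearMap)
          (Coalgebra.comul (R := k) x)) := rfl
    rw [this, hdecomp]
    simp only [map_add]
    rw [hzero _ (hNcoideal x hx)]
    simp [hφ x hx, hψ x hx]
end

section
/- Let A be a commutative unital k-algebra and let φ, ψ : H → A be unital algebra morphisms that both vanish on N. Then the convolution φ ⋆ (ψ ∘ S) vanishes on N. In particular (taking φ = u_A ∘ ε), the convolution inverse ψ ∘ S of ψ vanishes on N. -/
open TensorProduct

/-- if `φ, ψ : H → A` are unital algebra morphisms into a commutative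
algebra `A`, both vanishing on the left coideal `N ⊆ ker ε` (a coideal for the reduced
coproduct), then the convolution `φ ⋆ (ψ ∘ S)` vanishes on `N`; in particular the
convolution inverse `ψ ∘ S` of `ψ` vanishes on `N`. -/
theorem conv_with_antipode_vanishing {k H A : Type*} [Field k] [Ring H] [HopfAlgebra k H]
    [CommRing A] [Algebra k A] (N : Submodule k H)
    (hNcounit : ∀ x ∈ N, Coalgebra.counit (R := k) x = 0)
    (hNcoideal : ∀ x ∈ N,
      Coalgebra.comul (R := k) x - (1 : H) ⊗ₜ[k] x - x ⊗ₜ[k] (1 : H) ∈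
        Submodule.span k {t : H ⊗[k] H | ∃ x' ∈ N, ∃ y : H, t = x' ⊗ₜ[k] y})
    (φ ψ : H →ₐ[k] A) (hφ : ∀ x ∈ N, φ x = 0) (hψ : ∀ x ∈ N, ψ x = 0) :
    (∀ x ∈ N,
      conv k φ.toLinearMap (ψ.toLinearMap ∘ₗ HopfAlgebra.antipode (R := k) (A := H)) x = 0) ∧
    (∀ x ∈ N, ψ (HopfAlgebra.antipode (R := k) (A := H) x) = 0) := by
  have key : ∀ (χ : H →ₐ[k] A), (∀ x ∈ N, χ x = 0) → ∀ (f : H →ₗ[k] A), ∀ x ∈ N,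
      conv k χ.toLinearMap f x = f x := by
    intro χ hχ f x hx
    have hspan : ∀ t ∈ Submodule.span k
        {t : H ⊗[k] H | ∃ x' ∈ N, ∃ y : H, t = x' ⊗ₜ[k] y},
        LinearMap.mul' k A (TensorProduct.map χ.toLinearMap f t) = 0 := by
      intro t ht
      induction ht using Submodule.span_induction with
      | mem t ht =>
        obtain ⟨x', hx', y, rfl⟩ := ht
        simp [hχ x' hx']
      | zero => simp
      | add a b _ _ ha hb => simp [ha, hb]
      | smul c a _ ha => simp [ha]
    have hΔ := hNcoideal x hx
    have hsplit : Coalgebra.comul (R := k) x =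
        (Coalgebra.comul (R := k) x - (1 : H) ⊗ₜ[k] x - x ⊗ₜ[k] (1 : H))
          + (1 : H) ⊗ₜ[k] x + x ⊗ₜ[k] (1 : H) := by abel
    rw [conv]
    simp only [LinearMap.comp_apply]
    rw [hsplit]
    simp only [map_add, TensorProduct.map_tmul, LinearMap.mul'_apply, hspan _ hΔ]
    simp [hχ x hx]
  have hmul : LinearMap.mul' k A ∘ₗ TensorProduct.map ψ.toLinearMap ψ.toLinearMap =
      ψ.toLinearMap ∘ₗ LinearMap.mul' k H := by
    apply TensorProduct.ext'
    intro a b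
    simp
  have hinv : ∀ x : H, conv k ψ.toLinearMap
      (ψ.toLinearMap ∘ₗ HopfAlgebra.antipode (R := k) (A := H)) x
      = algebraMap k A (Coalgebra.counit (R := k) x) := by
    intro x
    rw [conv]
    simp only [LinearMap.comp_apply]
    have hfac : TensorProduct.map ψ.toLinearMap
        (ψ.toLinearMap ∘ₗ HopfAlgebra.antipode (R := k) (A := H)) =
        TensorProduct.map ψ.toLinearMap ψ.toLinearMap ∘ₗ
          LinearMap.lTensor H (HopfAlgebra.antipode (R := k) (A := H)) := by
      rw [LinearMap.lTensor, ← TensorProduct.map_comp, LinearMap.comp_id]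
    rw [hfac, LinearMap.comp_apply, ← LinearMap.comp_apply (LinearMap.mul' k A), hmul,
      LinearMap.comp_apply]
    rw [HopfAlgebra.mul_antipode_lTensor_comul_apply]
    simp
  have h2 : ∀ x ∈ N, ψ (HopfAlgebra.antipode (R := k) (A := H) x) = 0 := by
    intro x hx
    have := key ψ hψ (ψ.toLinearMap ∘ₗ HopfAlgebra.antipode (R := k) (A := H)) x hx
    rw [hinv x, hNcounit x hx, map_zero] at this
    simpa using this.symm
  refine ⟨?_, h2⟩
  intro x hx
  rw [key φ hφ _ x hx]
  simpa using h2 x hx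
end

section
/- Let A be a commutative unital k-algebra, let φ : H → A be a unital algebra morphism vanishing on N, and let α : H → A be any unital algebra morphism. Then (φ ⋆ α)(w) = α(w) for every w ∈ N. -/
open TensorProduct

/-- if `φ : H → A` is a unital algebra morphism vanishing on the left coideal
`N ⊆ ker ε` (for the reduced coproduct) and `α : H → A` is any unital algebra morphism,
then `(φ ⋆ α)(w) = α(w)` for every `w ∈ N`. -/
theorem conv_fixes_on_coideal {k H A : Type*} [Field k] [Ring H] [HopfAlgebra k H]
    [CommRing A] [Algebra k A] (N : Submodule k H)
    (hNcounit : ∀ x ∈ N, Coalgebra.counit (R := k) x = 0)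
    (hNcoideal : ∀ x ∈ N,
      Coalgebra.comul (R := k) x - (1 : H) ⊗ₜ[k] x - x ⊗ₜ[k] (1 : H) ∈
        Submodule.span k {t : H ⊗[k] H | ∃ x' ∈ N, ∃ y : H, t = x' ⊗ₜ[k] y})
    (φ α : H →ₐ[k] A) (hφ : ∀ x ∈ N, φ x = 0) :
    ∀ w ∈ N, conv k φ.toLinearMap α.toLinearMap w = α w := by
  intro w hw
  set f : H ⊗[k] H →ₗ[k] A :=
    LinearMap.mul' k A ∘ₗ TensorProduct.map φ.toLinearMap α.toLinearMap with hf
  have hconv : conv k φ.toLinearMap α.toLinearMap w = f (Coalgebra.comul w) := rfl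
  have key : f (Coalgebra.comul (R := k) w - (1 : H) ⊗ₜ[k] w - w ⊗ₜ[k] (1 : H)) = 0 := by
    refine Submodule.span_induction ?_ ?_ ?_ ?_ (hNcoideal w hw)
    · rintro t ⟨x', hx', y, rfl⟩
      simp [hf, hφ x' hx']
    · simp
    · intro a b _ _ ha hb; simp [map_add, ha, hb]
    · intro c a _ ha; simp [map_smul, ha]
  have h1 : f ((1 : H) ⊗ₜ[k] w) = α w := by simp [hf]
  have h2 : f (w ⊗ₜ[k] (1 : H)) = 0 := by simp [hf, hφ w hw]
  rw [map_sub, map_sub, h1, h2, sub_zero, sub_eq_zero] at key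
  rw [hconv, key]
end

section
/- Let A be a commutative unital k-algebra and let α, β : H → A be unital algebra morphisms with α(w) = β(w) for every w ∈ N. Then (α ⋆ (β ∘ S))(w) = 0 for every w ∈ N. Consequently, the group of characters vanishing on N acts transitively on the set of characters whose restriction to N is any fixed prescribed partial character. -/
/-!
Write `β⁻¹ := β ∘ S`; it is again a character because `S` is an anti-homomorphism and `A` is
commutative, and it is a two-sided convolution inverse of `β` since `S ⋆ id = id ⋆ S = ηε`.
Split `α ⋆ β⁻¹ = (α - β) ⋆ β⁻¹ + ηε`. On `w ∈ N` the second term is `ε(w) = 0`, and the first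
vanishes because `Δw = Δ̃w + 1 ⊗ w + w ⊗ 1` with `Δ̃w ∈ N ⊗ H`, while `α - β` kills `N` and `1`.
Hence `φ := α ⋆ β⁻¹` is a character vanishing on `N` with `φ ⋆ β = α ⋆ (β⁻¹ ⋆ β) = α`.
-/

open TensorProduct

open WithConv HopfAlgebra

namespace AlgHom

variable {R C A : Type*} [CommSemiring R] [Semiring C] [HopfAlgebra R C] [CommSemiring A]
  [Algebra R A]

noncomputable def compAntipode (β : C →ₐ[R] A) : C →ₐ[R] A :=
  .ofLinearMap (β.toLinearMap ∘ₗ antipode R) (by simp) fun x y => by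
    simp [antipode_mul_antidistrib, mul_comm]

lemma compAntipode_convMul_self (β : C →ₐ[R] A) :
    toConv β.compAntipode.toLinearMap * toConv β.toLinearMap = 1 := by
  have h := LinearMap.algHom_comp_convMul_distrib β (toConv (antipode R)) (toConv .id)
  rw [LinearMap.antipode_mul_id] at h
  refine ofConv_injective (h.symm.trans ?_)
  ext c
  simp

lemma self_convMul_compAntipode (β : C →ₐ[R] A) :
    toConv β.toLinearMap * toConv β.compAntipode.toLinearMap = 1 := by
  have h := LinearMap.algHom_comp_convMul_distrib β (toConv .id) (toConv (antipode R))
  rw [LinearMap.id_mul_antipode] at h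
  refine ofConv_injective (h.symm.trans ?_)
  ext c
  simp

end AlgHom

lemma conv_eq_ofConv_convMul {R C A : Type*} [CommSemiring R] [Semiring C] [Bialgebra R C]
    [Semiring A] [Algebra R A] (φ ψ : C →ₗ[R] A) :
    conv R φ ψ = ofConv (toConv φ * toConv ψ) := rfl

lemma convMul_apply_eq_zero_of_reducedComul_mem {R C A : Type*} [CommRing R] [Ring C]
    [Bialgebra R C] [Semiring A] [Algebra R A] {N : Submodule R C} {f g : C →ₗ[R] A}
    (hf_one : f 1 = 0) (hfN : ∀ x ∈ N, f x = 0) {w : C} (hw : w ∈ N)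
    (hΔw : Coalgebra.comul (R := R) w - (1 : C) ⊗ₜ[R] w - w ⊗ₜ[R] (1 : C) ∈
      Submodule.span R {t : C ⊗[R] C | ∃ x' ∈ N, ∃ y : C, t = x' ⊗ₜ[R] y}) :
    (toConv f * toConv g) w = 0 := by
  have hker : Submodule.span R {t : C ⊗[R] C | ∃ x' ∈ N, ∃ y : C, t = x' ⊗ₜ[R] y} ≤
      LinearMap.ker (TensorProduct.map f g) :=
    Submodule.span_le.2 <| by rintro _ ⟨x', hx', y, rfl⟩; simp [hfN x' hx']
  rw [LinearMap.convMul_apply, show Coalgebra.comul (R := R) w =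
    (Coalgebra.comul (R := R) w - (1 : C) ⊗ₜ[R] w - w ⊗ₜ[R] (1 : C)) + 1 ⊗ₜ w + w ⊗ₜ 1 by abel]
  simp [LinearMap.mem_ker.1 (hker hΔw), hf_one, hfN w hw]

/-- if `α, β : H → A` are unital algebra morphisms into a commutative algebra
agreeing on the left coideal `N ⊆ ker ε`, then `(α ⋆ (β ∘ S))(w) = 0` for all `w ∈ N`.
Consequently the group of characters vanishing on `N` acts transitively on the set of
characters with a fixed restriction to `N`: there is a character `φ` vanishing on `N`
with `φ ⋆ β = α`. -/
theorem conv_antipode_transitive {k H A : Type*} [Field k] [Ring H] [HopfAlgebra k H]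
    [CommRing A] [Algebra k A] (N : Submodule k H)
    (hNcounit : ∀ x ∈ N, Coalgebra.counit (R := k) x = 0)
    (hNcoideal : ∀ x ∈ N,
      Coalgebra.comul (R := k) x - (1 : H) ⊗ₜ[k] x - x ⊗ₜ[k] (1 : H) ∈
        Submodule.span k {t : H ⊗[k] H | ∃ x' ∈ N, ∃ y : H, t = x' ⊗ₜ[k] y})
    (α β : H →ₐ[k] A) (hαβ : ∀ w ∈ N, α w = β w) :
    (∀ w ∈ N,
      conv k α.toLinearMap (β.toLinearMap ∘ₗ HopfAlgebra.antipode (R := k) (A := H)) w = 0) ∧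
    (∃ φ : H →ₐ[k] A, (∀ w ∈ N, φ w = 0) ∧
      conv k φ.toLinearMap β.toLinearMap = α.toLinearMap) := by
  have vanish : ∀ w ∈ N, (toConv α.toLinearMap * toConv β.compAntipode.toLinearMap) w = 0 := by
    intro w hw
    have hsplit : toConv α.toLinearMap * toConv β.compAntipode.toLinearMap =
        toConv (α.toLinearMap - β.toLinearMap) * toConv β.compAntipode.toLinearMap + 1 := by
      rw [← β.self_convMul_compAntipode, toConv_sub, ← add_mul, sub_add_cancel]
    rw [hsplit, ofConv_add, LinearMap.add_apply,
      convMul_apply_eq_zero_of_reducedComul_mem (by simp) (fun x hx => by simp [hαβ x hx]) hw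
        (hNcoideal w hw), LinearMap.convOne_apply, hNcounit w hw, map_zero, zero_add]
  refine ⟨vanish, ofConv (toConv α * toConv β.compAntipode), vanish, ?_⟩
  rw [conv_eq_ofConv_convMul, AlgHom.toLinearMap_convMul, mul_assoc,
    β.compAntipode_convMul_self, mul_one, ofConv_toConv]
end

section
/- The ℚ-linear map ζ* on the ℚ-span of convergent words, defined by ζ*(𝟙) = 1 for the empty word 𝟙 and ζ*(z_{k₁}⋯z_{kₙ}) = ζ(k₁,…,kₙ) for nonempty convergent words, is an algebra morphism for the quasi-shuffle product: for all convergent words u and v, the element u ∗ v is a linear combination of convergent words and ζ*(u ∗ v) = ζ*(u)·ζ*(v). -/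
/-- The quasi-shuffle (stuffle) product on the free `ℚ`-module with basis the words
(lists of positive integers), defined on basis words by
`𝟙 ∗ w = w ∗ 𝟙 = w` and
`z_m u ∗ z_n v = z_m (u ∗ z_n v) + z_n (z_m u ∗ v) + z_{m+n} (u ∗ v)`. -/
noncomputable def qsh : List ℕ+ → List ℕ+ → (List ℕ+ →₀ ℚ)
  | [], w => Finsupp.single w 1
  | v, [] => Finsupp.single v 1
  | m :: u, n :: v =>
      Finsupp.mapDomain (fun w => m :: w) (qsh u (n :: v)) +
      Finsupp.mapDomain (fun w => n :: w) (qsh (m :: u) v) +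
      Finsupp.mapDomain (fun w => (m + n) :: w) (qsh u v)
  termination_by u v => u.length + v.length
  decreasing_by all_goals (simp [List.length]; try omega)

/-- A word is convergent when it is empty or its first letter is at least 2. -/
def ConvergentWord (w : List ℕ+) : Prop := ∀ k ∈ w.head?, 2 ≤ (k : ℕ)

/-- The multiple zeta value of a word `z_{k₁} ⋯ z_{kₙ}`:
`ζ(k₁,…,kₙ) = Σ_{m₁ > ⋯ > mₙ ≥ 1} m₁^{-k₁} ⋯ mₙ^{-kₙ}` (for the empty word this is `1`). -/
noncomputable def mzvWord (w : List ℕ+) : ℝ :=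
  ∑' m : {m : Fin w.length → ℕ // StrictAnti m ∧ ∀ i, 1 ≤ m i},
    ∏ i, (1 : ℝ) / ((m.1 i : ℕ) : ℝ) ^ ((w.get i : ℕ))

/-- The `ℚ`-linear map `ζ* ` on the span of words, sending a word to its multiple zeta
value (and the empty word `𝟙` to `1`). -/
noncomputable def zetaStar (f : List ℕ+ →₀ ℚ) : ℝ :=
  f.sum fun w c => (c : ℝ) * mzvWord w

/-!
Cutting the defining series off at `m₁ < N` gives finite sums `Z_N(w)` with
`Z_N(z_k w) = ∑_{1 ≤ a < N} a^{-k} Z_a(w)`. Expanding `Z_N(z_m u) · Z_N(z_n v)` and sorting the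
pairs of leading indices `(a, b)` into `a > b`, `a < b` and `a = b` reproduces the three terms of
the quasi-shuffle recursion, so `Z_N(u) Z_N(v) = Z_N(u ∗ v)` holds exactly for every `N`.
For a convergent word `z_k w` the bound `Z_a(w) ≤ (1 + log a)^{|w|} = O(√a)` makes
`∑ a^{-k} Z_a(w)` converge, hence `Z_N → ζ`, and the identity passes to the limit. The leading
letter of a word of `u ∗ v` is that of `u`, that of `v`, or their sum, so it stays convergent.
-/
open Finset Filter Topology

theorem Fin.strictAnti_cons {α : Type*} [Preorder α] {n : ℕ} {f : Fin n → α} {a : α} :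
    StrictAnti (Fin.cons a f : Fin (n + 1) → α) ↔ (∀ i, f i < a) ∧ StrictAnti f :=
  Fin.liftFun_cons (· > ·)

theorem Finset.sum_Ico_mul_sum_Ico {R : Type*} [CommSemiring R] (l N : ℕ) (f g : ℕ → R) :
    (∑ a ∈ Ico l N, f a) * ∑ b ∈ Ico l N, g b =
      ∑ a ∈ Ico l N, f a * ∑ b ∈ Ico l a, g b + ∑ b ∈ Ico l N, g b * ∑ a ∈ Ico l b, f a +
        ∑ a ∈ Ico l N, f a * g a := by
  have hsplit : ∀ a ∈ Ico l N, ∑ b ∈ Ico l N, g b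
      = ∑ b ∈ Ico l a, g b + (g a + ∑ b ∈ Ico (a + 1) N, g b) := fun a ha => by
    rw [mem_Ico] at ha
    rw [← sum_Ico_consecutive _ ha.1 ha.2.le, sum_eq_sum_Ico_succ_bot ha.2]
  rw [sum_mul, sum_congr rfl fun a ha => by rw [hsplit a ha]]
  simp only [mul_add, sum_add_distrib, mul_sum]
  rw [sum_Ico_Ico_comm' l N fun a b => f a * g b]
  simp only [mul_comm (g _)]
  ring

theorem convergentWord_cons {k : ℕ+} {w : List ℕ+} : ConvergentWord (k :: w) ↔ 2 ≤ (k : ℕ) := by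
  simp [ConvergentWord]

theorem exists_eq_cons_of_mem_support_mapDomain_cons {k : ℕ+} {f : List ℕ+ →₀ ℚ}
    {w : List ℕ+} (hw : w ∈ (f.mapDomain (k :: ·)).support) : ∃ w', w = k :: w' := by
  obtain ⟨w', -, rfl⟩ := mem_image.mp (Finsupp.mapDomain_support hw)
  exact ⟨w', rfl⟩

theorem ConvergentWord.of_mem_support_qsh {u v w : List ℕ+} (hu : ConvergentWord u)
    (hv : ConvergentWord v) (hw : w ∈ (qsh u v).support) : ConvergentWord w := by
  match u, v with
  | [], v =>
    rw [qsh.eq_1, Finsupp.mem_support_single] at hw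
    exact hw.1 ▸ hv
  | m :: u, [] =>
    rw [qsh.eq_2 _ (List.cons_ne_nil m u), Finsupp.mem_support_single] at hw
    exact hw.1 ▸ hu
  | m :: u, n :: v =>
    rw [qsh.eq_3] at hw
    rcases mem_union.mp (Finsupp.support_add hw) with hw | hw
    · rcases mem_union.mp (Finsupp.support_add hw) with hw | hw
      · obtain ⟨w', rfl⟩ := exists_eq_cons_of_mem_support_mapDomain_cons hw
        exact hu
      · obtain ⟨w', rfl⟩ := exists_eq_cons_of_mem_support_mapDomain_cons hw
        exact hv
    · obtain ⟨w', rfl⟩ := exists_eq_cons_of_mem_support_mapDomain_cons hw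
      rw [convergentWord_cons] at hu ⊢
      simp only [PNat.add_coe]
      omega

noncomputable def mzvTerm (w : List ℕ+) (m : Fin w.length → ℕ) : ℝ :=
  ∏ i, 1 / (m i : ℝ) ^ (w.get i : ℕ)

theorem mzvTerm_nonneg (w : List ℕ+) (m : Fin w.length → ℕ) : 0 ≤ mzvTerm w m :=
  prod_nonneg fun _ _ => by positivity

theorem mzvTerm_cons (k : ℕ+) (w : List ℕ+) (a : ℕ) (m : Fin w.length → ℕ) :
    mzvTerm (k :: w) (Fin.cons a m) = 1 / (a : ℝ) ^ (k : ℕ) * mzvTerm w m := by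
  simp [mzvTerm, Fin.prod_univ_succ, mul_comm]

open Classical in
noncomputable def mzvIndices (N n : ℕ) : Finset (Fin n → ℕ) :=
  {m ∈ Fintype.piFinset fun _ => range N | StrictAnti m ∧ ∀ i, 1 ≤ m i}

theorem mem_mzvIndices {N n : ℕ} {m : Fin n → ℕ} :
    m ∈ mzvIndices N n ↔ (StrictAnti m ∧ ∀ i, 1 ≤ m i) ∧ ∀ i, m i < N := by
  simp [mzvIndices, and_comm]

theorem mzvIndices_zero (N : ℕ) : mzvIndices N 0 = {Fin.elim0} := by
  ext m
  simp [mem_mzvIndices, Subsingleton.elim m Fin.elim0, Subsingleton.strictAnti]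

theorem cons_mem_mzvIndices_succ {N n a : ℕ} {m : Fin n → ℕ} :
    (Fin.cons a m : Fin (n + 1) → ℕ) ∈ mzvIndices N (n + 1) ↔
      a ∈ Ico 1 N ∧ m ∈ mzvIndices a n := by
  simp only [mem_mzvIndices, Fin.strictAnti_cons, Fin.forall_fin_succ, Fin.cons_zero,
    Fin.cons_succ, mem_Ico]
  constructor
  · rintro ⟨⟨⟨hlt, hm⟩, ha, hpos⟩, haN, -⟩
    exact ⟨⟨ha, haN⟩, ⟨hm, hpos⟩, hlt⟩
  · rintro ⟨⟨ha, haN⟩, ⟨hm, hpos⟩, hlt⟩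
    exact ⟨⟨⟨hlt, hm⟩, ha, hpos⟩, haN, fun i => (hlt i).trans haN⟩

noncomputable def truncMZV (N : ℕ) (w : List ℕ+) : ℝ :=
  ∑ m ∈ mzvIndices N w.length, mzvTerm w m

theorem truncMZV_nonneg (N : ℕ) (w : List ℕ+) : 0 ≤ truncMZV N w :=
  sum_nonneg fun m _ => mzvTerm_nonneg w m

theorem truncMZV_nil (N : ℕ) : truncMZV N [] = 1 := by
  simp [truncMZV, mzvIndices_zero, mzvTerm]

theorem truncMZV_cons (N : ℕ) (k : ℕ+) (w : List ℕ+) :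
    truncMZV N (k :: w) = ∑ a ∈ Ico 1 N, 1 / (a : ℝ) ^ (k : ℕ) * truncMZV a w := by
  simp only [truncMZV, mul_sum, sum_sigma']
  show ∑ m ∈ mzvIndices N (w.length + 1), mzvTerm (k :: w) m = _
  refine sum_nbij' (fun m => ⟨m 0, Fin.tail m⟩) (fun p => Fin.cons p.1 p.2) ?_ ?_ ?_ ?_ ?_
  · intro m hm
    rw [← Fin.cons_self_tail m, cons_mem_mzvIndices_succ] at hm
    simpa using hm
  · rintro ⟨a, m⟩ h
    simpa [cons_mem_mzvIndices_succ] using h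
  · intro m _
    exact Fin.cons_self_tail m
  · rintro ⟨a, m⟩ _
    simp
  · intro m _
    conv_lhs => rw [← Fin.cons_self_tail m]
    exact mzvTerm_cons k w _ _

theorem zetaStar_eq_linearCombination (f : List ℕ+ →₀ ℚ) :
    zetaStar f = Finsupp.linearCombination ℚ mzvWord f := by
  simp [zetaStar, Finsupp.linearCombination_apply, Rat.smul_def]

theorem linearCombination_truncMZV_mapDomain_cons (N : ℕ) (k : ℕ+) (f : List ℕ+ →₀ ℚ) :
    Finsupp.linearCombination ℚ (truncMZV N) (f.mapDomain (k :: ·)) =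
      ∑ a ∈ Ico 1 N, 1 / (a : ℝ) ^ (k : ℕ) * Finsupp.linearCombination ℚ (truncMZV a) f := by
  rw [Finsupp.linearCombination_mapDomain]
  simp only [Finsupp.linearCombination_apply, Function.comp_def, truncMZV_cons, Finsupp.sum,
    smul_sum, mul_sum, mul_smul_comm]
  exact sum_comm

theorem truncMZV_mul_truncMZV (N : ℕ) (u v : List ℕ+) :
    truncMZV N u * truncMZV N v = Finsupp.linearCombination ℚ (truncMZV N) (qsh u v) := by
  induction u, v using qsh.induct generalizing N with
  | case1 v => simp [qsh.eq_1, truncMZV_nil]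
  | case2 u hu => simp [qsh.eq_2 u hu, truncMZV_nil]
  | case3 m u n v ih_left ih_right ih_diag =>
    rw [truncMZV_cons, truncMZV_cons, sum_Ico_mul_sum_Ico, qsh.eq_3, map_add, map_add,
      linearCombination_truncMZV_mapDomain_cons, linearCombination_truncMZV_mapDomain_cons,
      linearCombination_truncMZV_mapDomain_cons]
    congr 1
    congr 1
    · refine sum_congr rfl fun a _ => ?_
      rw [← ih_left, truncMZV_cons]
      ring
    · refine sum_congr rfl fun b _ => ?_
      rw [← ih_right, truncMZV_cons]
      ring
    · refine sum_congr rfl fun a _ => ?_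
      rw [← ih_diag, PNat.add_coe, pow_add]
      ring

theorem sum_Ico_one_div_le_one_add_log (N : ℕ) : ∑ a ∈ Ico 1 N, 1 / (a : ℝ) ≤ 1 + Real.log N := by
  calc ∑ a ∈ Ico 1 N, 1 / (a : ℝ) ≤ ∑ a ∈ Icc 1 N, 1 / (a : ℝ) :=
        sum_le_sum_of_subset_of_nonneg Ico_subset_Icc_self fun _ _ _ => by positivity
    _ = harmonic N := by simp [harmonic_eq_sum_Icc]
    _ ≤ 1 + Real.log N := harmonic_le_one_add_log N

theorem truncMZV_le_one_add_log_pow (N : ℕ) (w : List ℕ+) :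
    truncMZV N w ≤ (1 + Real.log N) ^ w.length := by
  induction w generalizing N with
  | nil => simp [truncMZV_nil]
  | cons k w ih =>
    have hlog : ∀ a : ℕ, 0 ≤ 1 + Real.log a := fun a => by
      linarith [Real.log_natCast_nonneg a]
    have hterm : ∀ a ∈ Ico 1 N,
        1 / (a : ℝ) ^ (k : ℕ) * truncMZV a w ≤ (1 + Real.log N) ^ w.length * (1 / a) := by
      intro a ha
      obtain ⟨ha1, haN⟩ := mem_Ico.mp ha
      have ha1' : (1 : ℝ) ≤ a := by exact_mod_cast ha1
      rw [mul_comm]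
      refine mul_le_mul ?_ ?_ (by positivity) (pow_nonneg (hlog N) _)
      · exact (ih a).trans (pow_le_pow_left₀ (hlog a) (by gcongr) _)
      · simpa using one_div_pow_le_one_div_pow_of_le ha1' k.pos
    calc truncMZV N (k :: w) = ∑ a ∈ Ico 1 N, 1 / (a : ℝ) ^ (k : ℕ) * truncMZV a w :=
          truncMZV_cons N k w
      _ ≤ ∑ a ∈ Ico 1 N, (1 + Real.log N) ^ w.length * (1 / a) := sum_le_sum hterm
      _ ≤ (1 + Real.log N) ^ w.length * (1 + Real.log N) := by
          rw [← mul_sum]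
          exact mul_le_mul_of_nonneg_left (sum_Ico_one_div_le_one_add_log N) (pow_nonneg (hlog N) _)
      _ = (1 + Real.log N) ^ (k :: w).length := by rw [List.length_cons, pow_succ]

theorem one_add_log_pow_le_mul_sqrt (L : ℕ) {x : ℝ} (hx : 1 ≤ x) :
    (1 + Real.log x) ^ L ≤ (2 * L + 3) ^ L * x ^ (1 / 2 : ℝ) := by
  set ε : ℝ := 1 / (2 * L + 2) with hε
  have hε0 : 0 < ε := by positivity
  have hlog : 1 + Real.log x ≤ (2 * L + 3) * x ^ ε := by
    have h1 : Real.log x ≤ (2 * L + 2) * x ^ ε :=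
      calc Real.log x ≤ x ^ ε / ε := Real.log_le_rpow_div (by linarith) hε0
        _ = (2 * L + 2) * x ^ ε := by rw [hε]; field_simp
    have h2 : 1 ≤ x ^ ε := Real.one_le_rpow hx hε0.le
    linarith
  calc (1 + Real.log x) ^ L ≤ ((2 * L + 3) * x ^ ε) ^ L :=
        pow_le_pow_left₀ (by linarith [Real.log_nonneg hx]) hlog L
    _ = (2 * L + 3) ^ L * x ^ (ε * L) := by rw [mul_pow, Real.rpow_mul_natCast (by linarith)]
    _ ≤ (2 * L + 3) ^ L * x ^ (1 / 2 : ℝ) := by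
        gcongr
        rw [hε, one_div_mul_eq_div, div_le_iff₀ (by positivity)]
        linarith

theorem ConvergentWord.exists_truncMZV_le {w : List ℕ+} (hw : ConvergentWord w) :
    ∃ C, ∀ N, truncMZV N w ≤ C := by
  cases w with
  | nil => exact ⟨1, fun N => (truncMZV_nil N).le⟩
  | cons k w =>
    set D : ℝ := (2 * w.length + 3) ^ w.length
    have hsum : Summable fun a : ℕ => 1 / (a : ℝ) ^ (3 / 2 : ℝ) :=
      Real.summable_one_div_nat_rpow.mpr (by norm_num)
    refine ⟨D * ∑' a : ℕ, 1 / (a : ℝ) ^ (3 / 2 : ℝ), fun N => ?_⟩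
    have hterm : ∀ a ∈ Ico 1 N,
        1 / (a : ℝ) ^ (k : ℕ) * truncMZV a w ≤ D * (1 / (a : ℝ) ^ (3 / 2 : ℝ)) := by
      intro a ha
      have ha' : (1 : ℝ) ≤ a := by exact_mod_cast (mem_Ico.mp ha).1
      have hsplit : (a : ℝ) ^ (3 / 2 : ℝ) * a ^ (1 / 2 : ℝ) = a ^ 2 := by
        rw [← Real.rpow_add (by linarith)]
        norm_num
      calc 1 / (a : ℝ) ^ (k : ℕ) * truncMZV a w ≤ 1 / (a : ℝ) ^ 2 * (D * a ^ (1 / 2 : ℝ)) := by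
            refine mul_le_mul ?_ ?_ (truncMZV_nonneg a w) (by positivity)
            · exact one_div_pow_le_one_div_pow_of_le ha' (convergentWord_cons.mp hw)
            · exact (truncMZV_le_one_add_log_pow a w).trans
                (one_add_log_pow_le_mul_sqrt w.length ha')
        _ = D * (1 / (a : ℝ) ^ (3 / 2 : ℝ)) := by
            rw [← hsplit]
            field_simp
    calc truncMZV N (k :: w) = ∑ a ∈ Ico 1 N, 1 / (a : ℝ) ^ (k : ℕ) * truncMZV a w :=
          truncMZV_cons N k w
      _ ≤ ∑ a ∈ Ico 1 N, D * (1 / (a : ℝ) ^ (3 / 2 : ℝ)) := sum_le_sum hterm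
      _ ≤ D * ∑' a : ℕ, 1 / (a : ℝ) ^ (3 / 2 : ℝ) := by
          rw [← mul_sum]
          gcongr
          exact hsum.sum_le_tsum _ fun _ _ => by positivity

open Classical in
theorem tendsto_subtype_mzvIndices (n : ℕ) :
    Tendsto (fun N => (mzvIndices N n).subtype fun m => StrictAnti m ∧ ∀ i, 1 ≤ m i)
      atTop atTop := by
  refine tendsto_atTop_finset_of_monotone (fun N N' hNN' m hm => ?_)
    fun m => ⟨univ.sup m.1 + 1, ?_⟩
  · rw [mem_subtype, mem_mzvIndices] at hm ⊢
    exact ⟨hm.1, fun i => (hm.2 i).trans_le hNN'⟩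
  · rw [mem_subtype, mem_mzvIndices]
    exact ⟨m.2, fun i => Nat.lt_succ_of_le (le_sup (mem_univ i))⟩

open Classical in
theorem sum_subtype_mzvIndices (N : ℕ) (w : List ℕ+) :
    ∑ m ∈ (mzvIndices N w.length).subtype (fun m => StrictAnti m ∧ ∀ i, 1 ≤ m i),
      mzvTerm w m = truncMZV N w :=
  sum_subtype_of_mem _ fun _ hm => (mem_mzvIndices.mp hm).1

theorem ConvergentWord.summable_mzvTerm {w : List ℕ+} (hw : ConvergentWord w) :
    Summable fun m : {m : Fin w.length → ℕ // StrictAnti m ∧ ∀ i, 1 ≤ m i} => mzvTerm w m := by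
  obtain ⟨C, hC⟩ := hw.exists_truncMZV_le
  refine summable_of_sum_le (c := C) (fun m => mzvTerm_nonneg w m) fun F => ?_
  obtain ⟨N, hN⟩ := ((tendsto_subtype_mzvIndices w.length).eventually_ge_atTop F).exists
  exact (sum_le_sum_of_subset_of_nonneg hN fun m _ _ => mzvTerm_nonneg w m).trans
    ((sum_subtype_mzvIndices N w).trans_le (hC N))

theorem ConvergentWord.tendsto_truncMZV {w : List ℕ+} (hw : ConvergentWord w) :
    Tendsto (fun N => truncMZV N w) atTop (𝓝 (mzvWord w)) := by
  have := hw.summable_mzvTerm.hasSum.comp (tendsto_subtype_mzvIndices w.length)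
  simp only [Function.comp_def, sum_subtype_mzvIndices] at this
  exact this

theorem tendsto_linearCombination {α ι : Type*} {l : Filter ι} {φ : ι → α → ℝ} {ψ : α → ℝ}
    (f : α →₀ ℚ) (h : ∀ w ∈ f.support, Tendsto (fun i => φ i w) l (𝓝 (ψ w))) :
    Tendsto (fun i => Finsupp.linearCombination ℚ (φ i) f) l
      (𝓝 (Finsupp.linearCombination ℚ ψ f)) := by
  simp only [Finsupp.linearCombination_apply, Finsupp.sum]
  exact tendsto_finsetSum _ fun w hw => (h w hw).const_smul _

/-- `ζ*` is an algebra morphism for the quasi-shuffle product: for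
convergent words `u` and `v`, the quasi-shuffle `u ∗ v` is a linear combination of
convergent words and `ζ*(u ∗ v) = ζ*(u) · ζ*(v)`. -/
theorem zetaStar_qsh_mul (u v : List ℕ+)
    (hu : ConvergentWord u) (hv : ConvergentWord v) :
    (∀ w ∈ (qsh u v).support, ConvergentWord w) ∧
    zetaStar (qsh u v) = mzvWord u * mzvWord v := by
  have hconv : ∀ w ∈ (qsh u v).support, ConvergentWord w := fun _ => hu.of_mem_support_qsh hv
  refine ⟨hconv, tendsto_nhds_unique ?_ (hu.tendsto_truncMZV.mul hv.tendsto_truncMZV)⟩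
  simp only [zetaStar_eq_linearCombination, truncMZV_mul_truncMZV]
  exact tendsto_linearCombination _ fun w hw => (hconv w hw).tendsto_truncMZV
end

section
/- For any two convergent words u and v, the quasi-shuffle product u ∗ v is a linear combination (with nonnegative integer coefficients) of convergent words; i.e. the span of convergent words is a subalgebra of the quasi-shuffle algebra. -/
lemma mapCons_nat (a : ℕ+) (g : List ℕ+ →₀ ℚ) (h : ∀ w, ∃ c : ℕ, g w = (c : ℚ)) :
    ∀ w, ∃ c : ℕ, Finsupp.mapDomain (fun w => a :: w) g w = (c : ℚ) := by
  intro w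
  match w with
  | [] =>
    refine ⟨0, ?_⟩
    rw [Finsupp.mapDomain_notin_range]
    · simp
    · simp
  | b :: t =>
    by_cases hb : b = a
    · subst hb
      obtain ⟨c, hc⟩ := h t
      exact ⟨c, by rw [show b :: t = (fun w => b :: w) t from rfl,
        Finsupp.mapDomain_apply List.cons_injective, hc]⟩
    · refine ⟨0, ?_⟩
      rw [Finsupp.mapDomain_notin_range]
      · simp
      · rintro ⟨x, hx⟩
        simp at hx
        exact hb hx.1.symm

lemma mapCons_ne (a : ℕ+) (g : List ℕ+ →₀ ℚ) (w : List ℕ+)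
    (h : Finsupp.mapDomain (fun w => a :: w) g w ≠ 0) : ∃ t, w = a :: t := by
  by_contra hc
  push_neg at hc
  apply h
  rw [Finsupp.mapDomain_notin_range]
  rintro ⟨t, rfl⟩
  exact hc t rfl

theorem qsh_spec (u v : List ℕ+) : ∀ w : List ℕ+,
    (∃ c : ℕ, qsh u v w = (c : ℚ)) ∧
    (qsh u v w ≠ 0 → ∀ k ∈ w.head?,
      (∃ m ∈ u.head?, m ≤ k) ∨ (∃ n ∈ v.head?, n ≤ k)) := by
  match u, v with
  | [], v =>
    intro w
    rw [qsh]
    constructor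
    · by_cases hw : w = v
      · subst hw; exact ⟨1, by simp⟩
      · exact ⟨0, by simp [Finsupp.single_apply, Ne.symm hw]⟩
    · intro hne k hk
      right
      have hw : w = v := by
        by_contra hne'
        exact hne (by simp [Finsupp.single_apply, Ne.symm hne'])
      subst hw
      exact ⟨k, hk, le_refl k⟩
  | m :: u, [] =>
    intro w
    rw [show qsh (m :: u) [] = Finsupp.single (m :: u) 1 by rw [qsh]; simp]
    constructor
    · by_cases hw : w = m :: u
      · subst hw; exact ⟨1, by simp⟩
      · exact ⟨0, by simp [Finsupp.single_apply, Ne.symm hw]⟩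
    · intro hne k hk
      left
      have hw : w = m :: u := by
        by_contra hne'
        exact hne (by simp [Finsupp.single_apply, Ne.symm hne'])
      subst hw
      exact ⟨k, hk, le_refl k⟩
  | m :: u, n :: v =>
    have IH1 := qsh_spec u (n :: v)
    have IH2 := qsh_spec (m :: u) v
    have IH3 := qsh_spec u v
    intro w
    rw [qsh]
    have h1 := mapCons_nat m _ (fun w => (IH1 w).1) w
    have h2 := mapCons_nat n _ (fun w => (IH2 w).1) w
    have h3 := mapCons_nat (m + n) _ (fun w => (IH3 w).1) w
    obtain ⟨c1, hc1⟩ := h1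
    obtain ⟨c2, hc2⟩ := h2
    obtain ⟨c3, hc3⟩ := h3
    constructor
    · exact ⟨c1 + c2 + c3, by simp [Finsupp.add_apply, hc1, hc2, hc3]⟩
    · intro hne k hk
      simp only [Finsupp.add_apply] at hne
      have : Finsupp.mapDomain (fun w => m :: w) (qsh u (n :: v)) w ≠ 0 ∨
          Finsupp.mapDomain (fun w => n :: w) (qsh (m :: u) v) w ≠ 0 ∨
          Finsupp.mapDomain (fun w => (m + n) :: w) (qsh u v) w ≠ 0 := by
        by_contra hc
        push_neg at hc
        rw [hc.1, hc.2.1, hc.2.2] at hne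
        simp at hne
      rcases this with h | h | h
      · obtain ⟨t, rfl⟩ := mapCons_ne _ _ _ h
        simp only [List.head?] at hk
        left
        exact ⟨m, rfl, by simp at hk; subst hk; exact le_refl m⟩
      · obtain ⟨t, rfl⟩ := mapCons_ne _ _ _ h
        right
        exact ⟨n, rfl, by simp at hk; subst hk; exact le_refl n⟩
      · obtain ⟨t, rfl⟩ := mapCons_ne _ _ _ h
        left
        refine ⟨m, rfl, ?_⟩
        simp at hk; subst hk
        exact_mod_cast Nat.le_add_right (m:ℕ) n
  termination_by u.length + v.length
  decreasing_by all_goals (simp [List.length]; try omega)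


/-- for convergent words `u` and `v`, the quasi-shuffle product `u ∗ v`
is a linear combination of convergent words with nonnegative integer coefficients;
in particular the span of convergent words is a subalgebra of the quasi-shuffle
algebra. -/
theorem qsh_convergent (u v : List ℕ+)
    (hu : ConvergentWord u) (hv : ConvergentWord v) :
    ∀ w ∈ (qsh u v).support, ConvergentWord w ∧ ∃ c : ℕ, qsh u v w = (c : ℚ) := by
  intro w hw
  rw [Finsupp.mem_support_iff] at hw
  obtain ⟨hnat, hhead⟩ := qsh_spec u v w
  refine ⟨?_, hnat⟩
  intro k hk
  rcases hhead hw k hk with ⟨m, hm, hmk⟩ | ⟨n, hn, hnk⟩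
  · calc (2 : ℕ) ≤ (m : ℕ) := hu m hm
      _ ≤ (k : ℕ) := hmk
  · calc (2 : ℕ) ≤ (n : ℕ) := hv n hn
      _ ≤ (k : ℕ) := hnk
end

section
/- Let w = (k₁,…,kₙ) be a nonsingular list of integers and let I = (i₁,…,iₘ) be any composition of n. Then the contracted list I[w] is nonsingular; i.e. the set of nonsingular words is invariant under contractions. -/
/-- A nonempty list of integers `(k₁, …, kₙ)` is nonsingular if `k₁ ≠ 1`,
`k₁ + k₂ ∉ {2, 1, 0, −2, −4, …}` (when `n ≥ 2`), and `k₁ + ⋯ + k_j > j` for all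
`3 ≤ j ≤ n`; these are the integer points outside the singular set of the
meromorphically continued multiple zeta function. -/
def NonSingular (w : List ℤ) : Prop :=
  w ≠ [] ∧
  (w.take 1).sum ≠ 1 ∧
  (2 ≤ w.length →
    (w.take 2).sum ≠ 2 ∧ (w.take 2).sum ≠ 1 ∧
    ¬((w.take 2).sum ≤ 0 ∧ Even ((w.take 2).sum))) ∧
  ∀ j : ℕ, 3 ≤ j → j ≤ w.length → (j : ℤ) < (w.take j).sum

/-- The contraction `I[w]` of a list `w` of integers along a composition
`I = (i₁, …, iₘ)`: the list of the `m` consecutive block sums of `w` along `I`. -/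
def contractWord : List ℕ → List ℤ → List ℤ
  | [], _ => []
  | i :: I, w => (w.take i).sum :: contractWord I (w.drop i)

lemma contractWord_sum (I : List ℕ) (w : List ℤ) :
    (contractWord I w).sum = (w.take I.sum).sum := by
  induction I generalizing w with
  | nil => simp [contractWord]
  | cons i I ih =>
    simp [contractWord, ih, List.sum_cons, List.take_add, List.sum_append]

lemma contractWord_take (j : ℕ) (I : List ℕ) (w : List ℤ) :
    (contractWord I w).take j = contractWord (I.take j) w := by
  induction I generalizing j w with
  | nil => simp [contractWord]
  | cons i I ih =>
    cases j with
    | zero => simp [contractWord]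
    | succ j => simp [contractWord, ih]

lemma contractWord_length (I : List ℕ) (w : List ℤ) :
    (contractWord I w).length = I.length := by
  induction I generalizing w with
  | nil => rfl
  | cons i I ih => simp [contractWord, ih]

lemma my_length_le_sum (l : List ℕ) (h : ∀ x ∈ l, 0 < x) : l.length ≤ l.sum := by
  induction l with
  | nil => simp
  | cons a l ih =>
    simp only [List.length_cons, List.sum_cons]
    have h1 := h a (by simp)
    have h2 := ih (fun x hx => h x (by simp [hx]))
    omega

/-- if `w = (k₁, …, kₙ)` is a nonsingular list of integers and
`I = (i₁, …, iₘ)` is a composition of `n`, then the contracted list `I[w]` is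
nonsingular; i.e. the set of nonsingular words is invariant under contractions. -/
theorem nonSingular_contract (w : List ℤ) (I : List ℕ) (hw : NonSingular w)
    (hpos : ∀ i ∈ I, 0 < i) (hsum : I.sum = w.length) :
    NonSingular (contractWord I w) := by
  obtain ⟨hne, h1, h2, h3⟩ := hw
  have hwlen : 0 < w.length := List.length_pos_iff.mpr hne
  have key : ∀ j : ℕ, ((contractWord I w).take j).sum = (w.take ((I.take j).sum)).sum := by
    intro j; rw [contractWord_take, contractWord_sum]
  have hle : ∀ j : ℕ, (I.take j).sum ≤ w.length := by
    intro j
    have : (I.take j).sum ≤ I.sum := by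
      conv_rhs => rw [← List.take_append_drop j I]
      rw [List.sum_append]; omega
    omega
  have hge : ∀ j : ℕ, j ≤ I.length → j ≤ (I.take j).sum := by
    intro j hj
    have := my_length_le_sum (I.take j) (fun x hx => hpos x (List.mem_of_mem_take hx))
    rwa [List.length_take, min_eq_left hj] at this
  have hIne : I ≠ [] := by
    rintro rfl; simp at hsum; omega
  refine ⟨?_, ?_, ?_, ?_⟩
  · cases I with
    | nil => exact absurd rfl hIne
    | cons i I => simp [contractWord]
  · rw [key 1]
    have h1I : 1 ≤ I.length := by
      cases I with
      | nil => exact absurd rfl hIne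
      | cons i I => simp
    have hs1 : 1 ≤ (I.take 1).sum := hge 1 h1I
    have hsle := hle 1
    set s := (I.take 1).sum with hs
    rcases Nat.lt_or_ge s 3 with h | h
    · interval_cases s
      · exact h1
      · exact (h2 hsle).2.1
    · have hb := h3 s h hsle
      have : (3:ℤ) ≤ (s:ℤ) := by exact_mod_cast h
      intro heq; rw [heq] at hb; linarith
  · intro hlen2
    rw [contractWord_length] at hlen2
    rw [key 2]
    have hs2 : 2 ≤ (I.take 2).sum := hge 2 hlen2
    have hsle := hle 2
    set s := (I.take 2).sum with hs
    rcases Nat.lt_or_ge s 3 with h | h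
    · have : s = 2 := by omega
      rw [this]
      exact h2 (this ▸ hsle)
    · have hb := h3 s h hsle
      have h3s : (3:ℤ) ≤ (s:ℤ) := by exact_mod_cast h
      refine ⟨?_, ?_, ?_⟩
      · intro heq; rw [heq] at hb; linarith
      · intro heq; rw [heq] at hb; linarith
      · rintro ⟨ha, -⟩; linarith
  · intro j hj3 hjlen
    rw [contractWord_length] at hjlen
    rw [key j]
    have hsge := hge j hjlen
    have hb := h3 ((I.take j).sum) (by omega) (hle j)
    have : (j:ℤ) ≤ ((I.take j).sum : ℤ) := by exact_mod_cast hsge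
    linarith
end

section
/- Let A be an associative unital ℚ-algebra and a₁, a₂, a₃, a₄ ∈ A. For σ in the symmetric group S₄ set c(σ) := (−1)^{d(σ)} / (4 · binom(3, d(σ))), where d(σ) is the number of descents of σ. Then Σ_{σ ∈ S₄} (c(σ⁻¹) − c(σ)) · a_{σ(1)} a_{σ(2)} a_{σ(3)} a_{σ(4)} = (1/6)(a₂ a₄ a₁ a₃ − a₃ a₁ a₄ a₂). -/
/-- The descent number `d(σ)` of a permutation `σ` of `{1, …, n}`: the number of
positions `j` with `σ(j+1) < σ(j)`. -/
def descents {n : ℕ} (σ : Equiv.Perm (Fin n)) : ℕ :=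
  (Finset.univ.filter fun p : Fin n × Fin n =>
    (p.1 : ℕ) + 1 = (p.2 : ℕ) ∧ σ p.2 < σ p.1).card

/-- Solomon's coefficient `c(σ) = (−1)^{d(σ)} / (4 · binom(3, d(σ)))` for `σ ∈ S₄`. -/
noncomputable def eulerianCoeff (σ : Equiv.Perm (Fin 4)) : ℚ :=
  (-1 : ℚ) ^ descents σ / (4 * (Nat.choose 3 (descents σ) : ℚ))

/-- The 4-cycle sending `(0,1,2,3)` to `(1,3,0,2)`. -/
def sigma1 : Equiv.Perm (Fin 4) :=
  ⟨![1, 3, 0, 2], ![2, 0, 3, 1], by decide, by decide⟩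

/-- The 4-cycle sending `(0,1,2,3)` to `(2,0,3,1)`. -/
def sigma2 : Equiv.Perm (Fin 4) :=
  ⟨![2, 0, 3, 1], ![1, 3, 0, 2], by decide, by decide⟩

lemma coeff_vanish (σ : Equiv.Perm (Fin 4)) (h1 : σ ≠ sigma1) (h2 : σ ≠ sigma2) :
    eulerianCoeff σ⁻¹ - eulerianCoeff σ = 0 := by
  have hd : descents σ⁻¹ = descents σ := by revert h1 h2; revert σ; decide
  simp [eulerianCoeff, hd]

/-- in an associative unital `ℚ`-algebra,
`Σ_{σ ∈ S₄} (c(σ⁻¹) − c(σ)) a_{σ(1)} a_{σ(2)} a_{σ(3)} a_{σ(4)}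
  = (1/6)(a₂a₄a₁a₃ − a₃a₁a₄a₂)`. -/
theorem eulerian_idempotent_difference_depth_four
    {A : Type*} [Ring A] [Algebra ℚ A] (a : Fin 4 → A) :
    ∑ σ : Equiv.Perm (Fin 4),
      (eulerianCoeff σ⁻¹ - eulerianCoeff σ) • (a (σ 0) * a (σ 1) * a (σ 2) * a (σ 3)) =
      ((1 : ℚ) / 6) • (a 1 * a 3 * a 0 * a 2 - a 2 * a 0 * a 3 * a 1) := by
  have hne : sigma1 ≠ sigma2 := by decide
  rw [Finset.sum_eq_add sigma1 sigma2 hne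
    (fun σ _ hσ => by rw [coeff_vanish σ hσ.1 hσ.2, zero_smul])
    (fun h => absurd (Finset.mem_univ _) h)
    (fun h => absurd (Finset.mem_univ _) h)]
  have hinv1 : sigma1⁻¹ = sigma2 := by decide
  have hinv2 : sigma2⁻¹ = sigma1 := by decide
  have hd1 : descents sigma1 = 1 := by decide
  have hd2 : descents sigma2 = 2 := by decide
  rw [hinv1, hinv2]
  simp only [eulerianCoeff, hd1, hd2]
  norm_num
  have e1 : sigma1 0 = 1 := rfl
  have e2 : sigma1 1 = 3 := rfl
  have e3 : sigma1 2 = 0 := rfl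
  have e4 : sigma1 3 = 2 := rfl
  have f1 : sigma2 0 = 2 := rfl
  have f2 : sigma2 1 = 0 := rfl
  have f3 : sigma2 2 = 3 := rfl
  have f4 : sigma2 3 = 1 := rfl
  rw [e1, e2, e3, e4, f1, f2, f3, f4, smul_sub]
  module
end
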